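/- (δISS one-step contraction of the GGNN layer) Consider x_i⁺ = tanh(q̂_i ∘ (A x_i) + q̃_i ∘ (B u_i) + b) for i = 1, 2, where q̂_i = σ(Â x_i + B̂ u_i + b̂), q̃_i = σ(Ã x_i + B̃ u_i + b̃), σ is the logistic function applied entrywise, and ‖x_i‖_∞ ≤ 1, ‖u_i‖_∞ ≤ 1. Then ‖x₁⁺ - x₂⁺‖_∞ ≤ 𝒜_δ ‖x₁ - x₂‖_∞ + ℬ_δ ‖u₁ - u₂‖_∞, where 𝒜_δ = ‖A‖_∞ + (1/4)‖Â‖_∞‖A‖_∞ + (1/4)‖Ã‖_∞‖B‖_∞ and ℬ_δ = ‖B‖_∞ + (1/4)‖B̂‖_∞‖A‖_∞ + (1/4)‖B̃‖_∞‖B‖_∞. -/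

import Mathlib

attribute [local instance] Matrix.linftyOpNormedAddCommGroup

noncomputable def logistic (x : ℝ) : ℝ := 1 / (1 + Real.exp (-x))

/-! Since `tanh` is 1-Lipschitz, it suffices to bound the difference of the pre-activations
componentwise. Each gated term splits as `q₁ (v₁ - v₂) + (q₁ - q₂) v₂`: the first part is at most
`‖A‖ ‖x₁ - x₂‖` because `σ < 1`, the second at most `(1/4)(‖Â‖ ‖x₁ - x₂‖ + ‖B̂‖ ‖u₁ - u₂‖) ‖A‖`
because `σ' = σ (1 - σ) ≤ 1/4` and `|(A x₂)ᵢ| ≤ ‖A‖ ‖x₂‖ ≤ ‖A‖`; likewise for the `B`-term. -/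

open Real Matrix

lemma logistic_eq_sigmoid : logistic = sigmoid := by
  funext x
  rw [logistic, sigmoid_def, one_div]

lemma norm_logistic_le_one (x : ℝ) : ‖logistic x‖ ≤ 1 := by
  rw [logistic_eq_sigmoid, norm_of_nonneg (sigmoid_nonneg x)]
  exact sigmoid_le_one x

lemma lipschitzWith_sigmoid : LipschitzWith 4⁻¹ sigmoid := by
  refine lipschitzWith_of_nnnorm_deriv_le differentiable_sigmoid fun x => ?_
  have hs₀ := sigmoid_pos x
  have hs₁ := sigmoid_lt_one x
  rw [← NNReal.coe_le_coe, coe_nnnorm, deriv_sigmoid, norm_of_nonneg (by nlinarith)]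
  push_cast
  nlinarith [sq_nonneg (sigmoid x - 2⁻¹)]

lemma hasDerivAt_tanh (x : ℝ) : HasDerivAt tanh (1 / cosh x ^ 2) x := by
  have h := (hasDerivAt_sinh x).div (hasDerivAt_cosh x) (cosh_pos x).ne'
  rw [← sq, ← sq, cosh_sq_sub_sinh_sq] at h
  rwa [show tanh = sinh / cosh from funext tanh_eq_sinh_div_cosh]

lemma lipschitzWith_tanh : LipschitzWith 1 tanh := by
  refine lipschitzWith_of_nnnorm_deriv_le (fun x => (hasDerivAt_tanh x).differentiableAt)
    fun x => ?_
  have hcosh : 1 ≤ cosh x ^ 2 := one_le_pow₀ (one_le_cosh x)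
  rw [← NNReal.coe_le_coe, coe_nnnorm, (hasDerivAt_tanh x).deriv,
    norm_of_nonneg (by positivity), NNReal.coe_one]
  exact div_le_one_of_le₀ hcosh (by positivity)

lemma norm_mul_sub_mul_le {R : Type*} [NonUnitalSeminormedRing R] (a₁ a₂ b₁ b₂ : R) :
    ‖a₁ * b₁ - a₂ * b₂‖ ≤ ‖a₁‖ * ‖b₁ - b₂‖ + ‖a₁ - a₂‖ * ‖b₂‖ := by
  calc ‖a₁ * b₁ - a₂ * b₂‖ = ‖a₁ * (b₁ - b₂) + (a₁ - a₂) * b₂‖ := by noncomm_ring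
    _ ≤ ‖a₁‖ * ‖b₁ - b₂‖ + ‖a₁ - a₂‖ * ‖b₂‖ :=
      (norm_add_le _ _).trans (add_le_add (norm_mul_le _ _) (norm_mul_le _ _))

section MatrixNorm

variable {ι κ α : Type*} [Fintype ι] [Fintype κ] [NonUnitalNormedRing α]

lemma Matrix.norm_mulVec_apply_le (M : Matrix ι κ α) (v : κ → α) (i : ι) :
    ‖(M *ᵥ v) i‖ ≤ ‖M‖ * ‖v‖ :=
  (norm_le_pi_norm (M *ᵥ v) i).trans (Matrix.linfty_opNorm_mulVec M v)

lemma Matrix.norm_mulVec_apply_sub_le (M : Matrix ι κ α) (v w : κ → α) (i : ι) :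
    ‖(M *ᵥ v) i - (M *ᵥ w) i‖ ≤ ‖M‖ * ‖v - w‖ := by
  rw [← Pi.sub_apply, ← Matrix.mulVec_sub]
  exact M.norm_mulVec_apply_le (v - w) i

lemma norm_affine_apply_sub_le {μ : Type*} [Fintype μ] (M : Matrix ι κ α) (N : Matrix ι μ α)
    (c : ι → α) (x₁ x₂ : κ → α) (u₁ u₂ : μ → α) (i : ι) :
    ‖(M *ᵥ x₁) i + (N *ᵥ u₁) i + c i - ((M *ᵥ x₂) i + (N *ᵥ u₂) i + c i)‖ ≤
      ‖M‖ * ‖x₁ - x₂‖ + ‖N‖ * ‖u₁ - u₂‖ := by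
  rw [add_sub_add_right_eq_sub, add_sub_add_comm]
  exact (norm_add_le _ _).trans
    (add_le_add (M.norm_mulVec_apply_sub_le x₁ x₂ i) (N.norm_mulVec_apply_sub_le u₁ u₂ i))

lemma norm_gated_mulVec_apply_sub_le {q₁ q₂ : α} {δ : ℝ} (hq₁ : ‖q₁‖ ≤ 1) (hq : ‖q₁ - q₂‖ ≤ δ)
    (M : Matrix ι κ α) (v₁ : κ → α) {v₂ : κ → α} (hv₂ : ‖v₂‖ ≤ 1) (i : ι) :
    ‖q₁ * (M *ᵥ v₁) i - q₂ * (M *ᵥ v₂) i‖ ≤ ‖M‖ * ‖v₁ - v₂‖ + δ * ‖M‖ := by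
  have hδ : 0 ≤ δ := (norm_nonneg _).trans hq
  calc ‖q₁ * (M *ᵥ v₁) i - q₂ * (M *ᵥ v₂) i‖
      ≤ ‖q₁‖ * ‖(M *ᵥ v₁) i - (M *ᵥ v₂) i‖ + ‖q₁ - q₂‖ * ‖(M *ᵥ v₂) i‖ := norm_mul_sub_mul_le ..
    _ ≤ 1 * (‖M‖ * ‖v₁ - v₂‖) + δ * (‖M‖ * 1) := by
      gcongr
      · exact M.norm_mulVec_apply_sub_le v₁ v₂ i
      · exact (M.norm_mulVec_apply_le v₂ i).trans (by gcongr)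
    _ = ‖M‖ * ‖v₁ - v₂‖ + δ * ‖M‖ := by ring

end MatrixNorm

lemma norm_logistic_affine_sub_le {ι κ μ : Type*} [Fintype ι] [Fintype κ] [Fintype μ]
    (M : Matrix ι κ ℝ) (N : Matrix ι μ ℝ) (c : ι → ℝ) (x₁ x₂ : κ → ℝ) (u₁ u₂ : μ → ℝ) (i : ι) :
    ‖logistic ((M *ᵥ x₁) i + (N *ᵥ u₁) i + c i) - logistic ((M *ᵥ x₂) i + (N *ᵥ u₂) i + c i)‖ ≤
      4⁻¹ * (‖M‖ * ‖x₁ - x₂‖ + ‖N‖ * ‖u₁ - u₂‖) := by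
  rw [logistic_eq_sigmoid]
  refine (lipschitzWith_sigmoid.norm_sub_le _ _).trans ?_
  push_cast
  gcongr
  exact norm_affine_apply_sub_le M N c x₁ x₂ u₁ u₂ i

theorem ggnn_deltaISS_one_step_general {n m : ℕ}
    (A Ahat Atil : Matrix (Fin n) (Fin n) ℝ)
    (B Bhat Btil : Matrix (Fin n) (Fin m) ℝ)
    (b bhat btil : Fin n → ℝ)
    (x₁ x₂ : Fin n → ℝ) (u₁ u₂ : Fin m → ℝ)
    (hx₂ : ‖x₂‖ ≤ 1) (hu₂ : ‖u₂‖ ≤ 1)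
    (qhat₁ qhat₂ qtil₁ qtil₂ xp₁ xp₂ : Fin n → ℝ)
    (hqhat₁ : qhat₁ = fun i => logistic (Ahat.mulVec x₁ i + Bhat.mulVec u₁ i + bhat i))
    (hqhat₂ : qhat₂ = fun i => logistic (Ahat.mulVec x₂ i + Bhat.mulVec u₂ i + bhat i))
    (hqtil₁ : qtil₁ = fun i => logistic (Atil.mulVec x₁ i + Btil.mulVec u₁ i + btil i))
    (hqtil₂ : qtil₂ = fun i => logistic (Atil.mulVec x₂ i + Btil.mulVec u₂ i + btil i))
    (hxp₁ : xp₁ = fun i => Real.tanh (qhat₁ i * A.mulVec x₁ i + qtil₁ i * B.mulVec u₁ i + b i))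
    (hxp₂ : xp₂ = fun i => Real.tanh (qhat₂ i * A.mulVec x₂ i + qtil₂ i * B.mulVec u₂ i + b i)) :
    ‖xp₁ - xp₂‖ ≤
      (‖A‖ + (1/4) * ‖Ahat‖ * ‖A‖ + (1/4) * ‖Atil‖ * ‖B‖) * ‖x₁ - x₂‖ +
      (‖B‖ + (1/4) * ‖Bhat‖ * ‖A‖ + (1/4) * ‖Btil‖ * ‖B‖) * ‖u₁ - u₂‖ := by
  rw [pi_norm_le_iff_of_nonneg (by positivity)]
  intro i
  have hA : ‖qhat₁ i * (A *ᵥ x₁) i - qhat₂ i * (A *ᵥ x₂) i‖ ≤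
      ‖A‖ * ‖x₁ - x₂‖ + 4⁻¹ * (‖Ahat‖ * ‖x₁ - x₂‖ + ‖Bhat‖ * ‖u₁ - u₂‖) * ‖A‖ := by
    subst hqhat₁ hqhat₂
    exact norm_gated_mulVec_apply_sub_le (norm_logistic_le_one _)
      (norm_logistic_affine_sub_le Ahat Bhat bhat x₁ x₂ u₁ u₂ i) A x₁ hx₂ i
  have hB : ‖qtil₁ i * (B *ᵥ u₁) i - qtil₂ i * (B *ᵥ u₂) i‖ ≤
      ‖B‖ * ‖u₁ - u₂‖ + 4⁻¹ * (‖Atil‖ * ‖x₁ - x₂‖ + ‖Btil‖ * ‖u₁ - u₂‖) * ‖B‖ := by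
    subst hqtil₁ hqtil₂
    exact norm_gated_mulVec_apply_sub_le (norm_logistic_le_one _)
      (norm_logistic_affine_sub_le Atil Btil btil x₁ x₂ u₁ u₂ i) B u₁ hu₂ i
  subst hxp₁ hxp₂
  refine (lipschitzWith_tanh.norm_sub_le _ _).trans ?_
  rw [NNReal.coe_one, one_mul, add_sub_add_right_eq_sub, add_sub_add_comm]
  exact (norm_add_le _ _).trans ((add_le_add hA hB).trans_eq (by ring))

theorem ggnn_deltaISS_one_step {n m : ℕ}
    (A Ahat Atil : Matrix (Fin n) (Fin n) ℝ)
    (B Bhat Btil : Matrix (Fin n) (Fin m) ℝ)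
    (b bhat btil : Fin n → ℝ)
    (x₁ x₂ : Fin n → ℝ) (u₁ u₂ : Fin m → ℝ)
    (hx₁ : ‖x₁‖ ≤ 1) (hx₂ : ‖x₂‖ ≤ 1) (hu₁ : ‖u₁‖ ≤ 1) (hu₂ : ‖u₂‖ ≤ 1)
    (qhat₁ qhat₂ qtil₁ qtil₂ xp₁ xp₂ : Fin n → ℝ)
    (hqhat₁ : qhat₁ = fun i => logistic (Ahat.mulVec x₁ i + Bhat.mulVec u₁ i + bhat i))
    (hqhat₂ : qhat₂ = fun i => logistic (Ahat.mulVec x₂ i + Bhat.mulVec u₂ i + bhat i))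
    (hqtil₁ : qtil₁ = fun i => logistic (Atil.mulVec x₁ i + Btil.mulVec u₁ i + btil i))
    (hqtil₂ : qtil₂ = fun i => logistic (Atil.mulVec x₂ i + Btil.mulVec u₂ i + btil i))
    (hxp₁ : xp₁ = fun i => Real.tanh (qhat₁ i * A.mulVec x₁ i + qtil₁ i * B.mulVec u₁ i + b i))
    (hxp₂ : xp₂ = fun i => Real.tanh (qhat₂ i * A.mulVec x₂ i + qtil₂ i * B.mulVec u₂ i + b i)) :
    ‖xp₁ - xp₂‖ ≤
      (‖A‖ + (1/4) * ‖Ahat‖ * ‖A‖ + (1/4) * ‖Atil‖ * ‖B‖) * ‖x₁ - x₂‖ +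
      (‖B‖ + (1/4) * ‖Bhat‖ * ‖A‖ + (1/4) * ‖Btil‖ * ‖B‖) * ‖u₁ - u₂‖ :=
  ggnn_deltaISS_one_step_general A Ahat Atil B Bhat Btil b bhat btil x₁ x₂ u₁ u₂ hx₂ hu₂ qhat₁ qhat₂
    qtil₁ qtil₂ xp₁ xp₂ hqhat₁ hqhat₂ hqtil₁ hqtil₂ hxp₁ hxp₂
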